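/- arXiv:math/0605299 — 4 statements merged into one kernel-verified Lean document; each statement's English description precedes it below -/
import Mathlib

section
/- Let H be a Hilbert space and let U₁, U₂ be commuting contractions on H. Then for every ξ ∈ H, the double averages (1/(k₁k₂))·Σ_{i=0}^{k₁−1} Σ_{j=0}^{k₂−1} U₁^i U₂^j ξ converge in norm, as (k₁,k₂) → ∞ in Pringsheim's sense, to P ξ, where P is the orthogonal projection onto {η ∈ H : U₁η = η and U₂η = η}. -/
/-!
By von Neumann's mean ergodic theorem the Cesàro averages `A¹ₖ`, `A²ₖ` of `U₁`, `U₂` converge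
strongly to the orthogonal projections `P₁`, `P₂` onto their fixed spaces. The double average is
`A¹ₖ₁ (A²ₖ₂ ξ)`, and since every `A¹ₖ` is a contraction, `A¹ₖ₁ (A²ₖ₂ ξ - P₂ ξ)` is small uniformly
in `k₁`; hence the double averages converge in Pringsheim's sense to `P₁ (P₂ ξ)`.
Since `U₂` commutes with every `A¹ₖ`, it commutes with their strong limit `P₁`, so `P₁ (P₂ ξ)` is
fixed by both operators, while `ξ - P₁ (P₂ ξ) = (ξ - P₂ ξ) + (P₂ ξ - P₁ (P₂ ξ))` is orthogonal to
the joint fixed space. So `P₁ (P₂ ξ) = P ξ`.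
-/

open Finset Filter
open scoped Topology

section Pringsheim

variable {α β 𝕜 E F : Type*} [NontriviallyNormedField 𝕜] [NormedAddCommGroup E]
  [NormedSpace 𝕜 E] [NormedAddCommGroup F] [NormedSpace 𝕜 F]

theorem tendsto_apply_prod_of_norm_le {l₁ : Filter α} {l₂ : Filter β} {A : α → E →L[𝕜] F}
    {C : ℝ} (hA : ∀ a, ‖A a‖ ≤ C) {u : β → E} {y : E} {z : F} (hu : Tendsto u l₂ (𝓝 y))
    (hy : Tendsto (fun a ↦ A a y) l₁ (𝓝 z)) :
    Tendsto (fun p : α × β ↦ A p.1 (u p.2)) (l₁ ×ˢ l₂) (𝓝 z) := by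
  have hsmall : Tendsto (fun p : α × β ↦ A p.1 (u p.2 - y)) (l₁ ×ˢ l₂) (𝓝 0) := by
    have hu' : Tendsto (fun p : α × β ↦ C * ‖u p.2 - y‖) (l₁ ×ˢ l₂) (𝓝 0) := by
      simpa using (tendsto_iff_norm_sub_tendsto_zero.1 hu).comp tendsto_snd |>.const_mul C
    exact squeeze_zero_norm (fun p ↦ (A p.1).le_of_opNorm_le (hA p.1) _) hu'
  simpa using hsmall.add (hy.comp tendsto_fst)

end Pringsheim

namespace Submodule

variable {𝕜 E : Type*} [RCLike 𝕜] [NormedAddCommGroup E] [InnerProductSpace 𝕜 E]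

theorem eq_of_mem_of_sub_mem_orthogonal {K : Submodule 𝕜 E} {u v w : E} (hv : v ∈ K)
    (hw : w ∈ K) (hvo : u - v ∈ Kᗮ) (hwo : u - w ∈ Kᗮ) : v = w := by
  have hK : w - v ∈ K ⊓ Kᗮ := ⟨K.sub_mem hw hv, by simpa using Kᗮ.sub_mem hvo hwo⟩
  rw [K.inf_orthogonal_eq_bot, mem_bot, sub_eq_zero] at hK
  exact hK.symm

theorem sub_starProjection_starProjection_mem_orthogonal_inf (K₁ K₂ : Submodule 𝕜 E)
    [K₁.HasOrthogonalProjection] [K₂.HasOrthogonalProjection] (x : E) :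
    x - K₁.starProjection (K₂.starProjection x) ∈ (K₁ ⊓ K₂)ᗮ := by
  rw [← sub_add_sub_cancel x (K₂.starProjection x)]
  exact add_mem (orthogonal_le inf_le_right (sub_starProjection_mem_orthogonal _))
    (orthogonal_le inf_le_left (sub_starProjection_mem_orthogonal _))

end Submodule

namespace ContinuousLinearMap

variable {𝕜 E : Type*} [RCLike 𝕜] [NormedAddCommGroup E]

noncomputable def cesaroAverage [NormedSpace 𝕜 E] (U : E →L[𝕜] E) (n : ℕ) : E →L[𝕜] E :=
  (n : 𝕜)⁻¹ • ∑ i ∈ range n, U ^ i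

section NormedSpace

variable [NormedSpace 𝕜 E] {U V : E →L[𝕜] E}

theorem cesaroAverage_apply (U : E →L[𝕜] E) (n : ℕ) (x : E) :
    U.cesaroAverage n x = birkhoffAverage 𝕜 U id n x := by
  simp [cesaroAverage, birkhoffAverage, birkhoffSum]

theorem norm_pow_le_one (hU : ‖U‖ ≤ 1) (i : ℕ) : ‖U ^ i‖ ≤ 1 := by
  rcases i.eq_zero_or_pos with rfl | hi
  · exact norm_id_le
  · exact (norm_pow_le' U hi).trans (pow_le_one₀ (norm_nonneg U) hU)

theorem norm_cesaroAverage_le (hU : ‖U‖ ≤ 1) (n : ℕ) : ‖U.cesaroAverage n‖ ≤ 1 :=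
  calc ‖U.cesaroAverage n‖ ≤ ‖(n : 𝕜)⁻¹‖ * ∑ i ∈ range n, ‖U ^ i‖ := by
        rw [cesaroAverage, norm_smul]
        gcongr
        exact norm_sum_le _ _
    _ ≤ (n : ℝ)⁻¹ * ∑ i ∈ range n, 1 := by
        rw [norm_inv, RCLike.norm_natCast]
        gcongr with i
        exact norm_pow_le_one hU i
    _ ≤ 1 := by
        rw [sum_const, card_range, nsmul_one]
        exact inv_mul_le_one_of_le₀ le_rfl n.cast_nonneg

theorem _root_.Commute.cesaroAverage_left (h : Commute U V) (n : ℕ) :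
    Commute (U.cesaroAverage n) V :=
  ((Commute.sum_left _ _ _ fun i _ ↦ h.pow_left i)).smul_left _

theorem cesaroAverage_apply_cesaroAverage (U V : E →L[𝕜] E) (m n : ℕ) (x : E) :
    U.cesaroAverage m (V.cesaroAverage n x) =
      ((m : 𝕜) * n)⁻¹ • ∑ i ∈ range m, ∑ j ∈ range n, (U ^ i * V ^ j) x := by
  change (U.cesaroAverage m * V.cesaroAverage n) x = _
  rw [cesaroAverage, cesaroAverage, smul_mul_smul_comm, sum_mul_sum, mul_inv]
  simp

end NormedSpace

variable [InnerProductSpace 𝕜 E] [CompleteSpace E] {U V : E →L[𝕜] E}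

theorem tendsto_cesaroAverage (hU : ‖U‖ ≤ 1) (x : E) :
    Tendsto (U.cesaroAverage · x) atTop (𝓝 ((U.eqLocus (1 : E →L[𝕜] E)).starProjection x)) := by
  simp only [cesaroAverage_apply]
  exact U.tendsto_birkhoffAverage_orthogonalProjection hU x

theorem _root_.Commute.apply_starProjection_eqLocus (h : Commute U V) (hU : ‖U‖ ≤ 1) (x : E) :
    V ((U.eqLocus (1 : E →L[𝕜] E)).starProjection x) =
      (U.eqLocus (1 : E →L[𝕜] E)).starProjection (V x) := by
  have hVA : (V ∘ (U.cesaroAverage · x)) = (U.cesaroAverage · (V x)) :=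
    funext fun n ↦ (DFunLike.congr_fun (h.cesaroAverage_left n).eq x).symm
  refine tendsto_nhds_unique ?_ (tendsto_cesaroAverage hU (V x))
  exact hVA ▸ (V.continuous.tendsto _).comp (tendsto_cesaroAverage hU x)

end ContinuousLinearMap

theorem double_mean_ergodic_general {H : Type*} [NormedAddCommGroup H]
    [InnerProductSpace ℂ H] [CompleteSpace H]
    (U₁ U₂ : H →L[ℂ] H) (hU₁ : ‖U₁‖ ≤ 1) (hU₂ : ‖U₂‖ ≤ 1)
    (hcomm : U₁ * U₂ = U₂ * U₁)
    (P : H →L[ℂ] H)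
    -- `P` is the orthogonal projection onto `{η | U₁ η = η ∧ U₂ η = η}`:
    (hPmem : ∀ ξ : H, U₁ (P ξ) = P ξ ∧ U₂ (P ξ) = P ξ)
    (hPorth : ∀ (ξ η : H), U₁ η = η → U₂ η = η → inner ℂ (ξ - P ξ) η = (0 : ℂ)) :
    ∀ ξ : H, ∀ ε > (0 : ℝ), ∃ N : ℕ, ∀ k₁ k₂ : ℕ, N ≤ k₁ → N ≤ k₂ →
      ‖((k₁ : ℂ) * (k₂ : ℂ))⁻¹ •
          (∑ i ∈ range k₁, ∑ j ∈ range k₂, ((U₁ ^ i) * (U₂ ^ j)) ξ) - P ξ‖ < ε := by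
  intro ξ ε hε
  set K₁ := U₁.eqLocus (1 : H →L[ℂ] H)
  set K₂ := U₂.eqLocus (1 : H →L[ℂ] H)
  have hPξ : P ξ = K₁.starProjection (K₂.starProjection ξ) := by
    refine Submodule.eq_of_mem_of_sub_mem_orthogonal (K := K₁ ⊓ K₂) (u := ξ) (hPmem ξ)
      ⟨K₁.starProjection_apply_mem _, ?_⟩ ((Submodule.mem_orthogonal' _ _).2 fun η hη ↦
        hPorth ξ η hη.1 hη.2) (K₁.sub_starProjection_starProjection_mem_orthogonal_inf K₂ ξ)
    have hfix : U₂ (K₂.starProjection ξ) = K₂.starProjection ξ := K₂.starProjection_apply_mem ξ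
    exact (Commute.apply_starProjection_eqLocus hcomm hU₁ _).trans (congrArg _ hfix)
  have hlim : Tendsto (fun k : ℕ × ℕ ↦ U₁.cesaroAverage k.1 (U₂.cesaroAverage k.2 ξ))
      (atTop ×ˢ atTop) (𝓝 (P ξ)) :=
    hPξ ▸ tendsto_apply_prod_of_norm_le (ContinuousLinearMap.norm_cesaroAverage_le hU₁)
      (ContinuousLinearMap.tendsto_cesaroAverage hU₂ ξ)
      (ContinuousLinearMap.tendsto_cesaroAverage hU₁ _)
  obtain ⟨N, -, hN⟩ := (atTop_basis.prod_self.tendsto_iff Metric.nhds_basis_ball).1 hlim ε hε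
  refine ⟨N, fun k₁ k₂ h₁ h₂ ↦ ?_⟩
  have hk := hN (k₁, k₂) ⟨h₁, h₂⟩
  rwa [Metric.mem_ball, dist_eq_norm,
    ContinuousLinearMap.cesaroAverage_apply_cesaroAverage] at hk

/-- Two-parameter mean ergodic theorem: for commuting contractions `U₁, U₂` on a
complex Hilbert space, the double averages converge in norm, in Pringsheim's
sense, to `P ξ` where `P` is the orthogonal projection onto the joint
fixed-point subspace. -/
theorem double_mean_ergodic {H : Type*} [NormedAddCommGroup H]
    [InnerProductSpace ℂ H] [CompleteSpace H]
    (U₁ U₂ : H →L[ℂ] H) (hU₁ : ‖U₁‖ ≤ 1) (hU₂ : ‖U₂‖ ≤ 1)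
    (hcomm : U₁ * U₂ = U₂ * U₁)
    (P : H →L[ℂ] H)
    -- `P` is the orthogonal projection onto `{η | U₁ η = η ∧ U₂ η = η}`:
    (hPmem : ∀ ξ : H, U₁ (P ξ) = P ξ ∧ U₂ (P ξ) = P ξ)
    (hPid : ∀ η : H, U₁ η = η → U₂ η = η → P η = η)
    (hPorth : ∀ (ξ η : H), U₁ η = η → U₂ η = η → inner ℂ (ξ - P ξ) η = (0 : ℂ)) :
    ∀ ξ : H, ∀ ε > (0 : ℝ), ∃ N : ℕ, ∀ k₁ k₂ : ℕ, N ≤ k₁ → N ≤ k₂ →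
      ‖((k₁ : ℂ) * (k₂ : ℂ))⁻¹ •
          (∑ i ∈ range k₁, ∑ j ∈ range k₂, ((U₁ ^ i) * (U₂ ^ j)) ξ) - P ξ‖ < ε :=
  double_mean_ergodic_general U₁ U₂ hU₁ hU₂ hcomm P hPmem hPorth
end

section
/- Let B be a reflexive Banach space and T : B → B a linear contraction. Then for every x ∈ B, the Cesàro averages (1/n)·Σ_{k=0}^{n−1} T^k x converge in norm to a T-fixed point. (Mean ergodic theorem in reflexive spaces, used for L^p, 1 < p < ∞.) -/
/-!
The Cesàro averages `Aₙ x` are bounded by `‖x‖`, so by reflexivity (Banach–Alaoglu in the bidual)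
they have a weak cluster point `y`. Since `T (Aₙ x) - Aₙ x = (Tⁿ x - x) / n → 0`, the point `y`
is fixed by `T`. Since `x - Aₙ x` lies in the range of `T - 1`, and norm-closed subspaces are weakly
closed, `x - y` lies in the closure of that range, where the averages tend to `0`: on the range
itself by telescoping, and on its closure because the averaging operators are uniformly
`1`-Lipschitz. Hence `Aₙ x = Aₙ (x - y) + y → y`.
-/

open Filter Finset Function Topology Bornology

section

variable {𝕜 B : Type*} [RCLike 𝕜] [NormedAddCommGroup B] [NormedSpace 𝕜 B]

theorem exists_mapClusterPt_toWeakSpace_of_isBounded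
    (hrefl : Surjective (NormedSpace.inclusionInDoubleDual 𝕜 B))
    {ι : Type*} {l : Filter ι} [l.NeBot] {u : ι → B} (hu : IsBounded (Set.range u)) :
    ∃ y : B, MapClusterPt (toWeakSpace 𝕜 B y) l (toWeakSpace 𝕜 B ∘ u) := by
  set S := toWeakSpace 𝕜 B '' Set.range u
  have hS : IsCompact (closure S) := by
    refine NormedSpace.isCompact_closure_of_isBounded 𝕜 B S ?_ fun ξ _ ↦ hrefl ξ
    rwa [Set.preimage_image_eq _ (toWeakSpace 𝕜 B).injective]
  obtain ⟨y, -, hy⟩ := hS.exists_mapClusterPt (f := l) (u := toWeakSpace 𝕜 B ∘ u) <| by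
    rw [le_principal_iff, Filter.mem_map]
    exact univ_mem' fun i ↦ subset_closure ⟨u i, ⟨i, rfl⟩, rfl⟩
  exact ⟨(toWeakSpace 𝕜 B).symm y, hy⟩

theorem Submodule.toWeakSpace_closure (M : Submodule 𝕜 B) :
    toWeakSpace 𝕜 B '' closure (M : Set B) = closure (toWeakSpace 𝕜 B '' M) :=
  let _ : NormedSpace ℝ B := NormedSpace.restrictScalars ℝ 𝕜 B
  (M.restrictScalars ℝ).convex.toWeakSpace_closure 𝕜

namespace ContinuousLinearMap

variable (T : B →L[𝕜] B)

theorem lipschitzWith_one_of_norm_le_one (hT : ‖T‖ ≤ 1) : LipschitzWith 1 T :=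
  T.lipschitz.weaken (by exact_mod_cast hT)

theorem norm_iterate_apply_le (hT : ‖T‖ ≤ 1) (k : ℕ) (x : B) : ‖T^[k] x‖ ≤ ‖x‖ := by
  simpa [iterate_map_zero] using ((T.lipschitzWith_one_of_norm_le_one hT).iterate k).dist_le_mul x 0

theorem norm_birkhoffAverage_le (hT : ‖T‖ ≤ 1) (n : ℕ) (x : B) :
    ‖birkhoffAverage 𝕜 T id n x‖ ≤ ‖x‖ := by
  rcases eq_or_ne n 0 with rfl | hn
  · simp
  calc ‖birkhoffAverage 𝕜 T id n x‖ ≤ (n : ℝ)⁻¹ * ∑ k ∈ Finset.range n, ‖T^[k] x‖ := by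
        rw [birkhoffAverage, birkhoffSum, norm_smul, norm_inv, RCLike.norm_natCast]
        gcongr
        exact norm_sum_le _ _
    _ ≤ (n : ℝ)⁻¹ * ∑ _k ∈ Finset.range n, ‖x‖ := by
        gcongr with k
        exact T.norm_iterate_apply_le hT k x
    _ = ‖x‖ := by
        rw [Finset.sum_const, Finset.card_range, nsmul_eq_mul, inv_mul_cancel_left₀]
        exact_mod_cast hn

theorem birkhoffAverage_apply_sub (n : ℕ) (x y : B) :
    birkhoffAverage 𝕜 T id n (x - y) = birkhoffAverage 𝕜 T id n x - birkhoffAverage 𝕜 T id n y := by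
  simp [birkhoffAverage, birkhoffSum, iterate_map_sub, smul_sub, Finset.sum_sub_distrib]

theorem apply_birkhoffAverage (n : ℕ) (x : B) :
    T (birkhoffAverage 𝕜 T id n x) = birkhoffAverage 𝕜 T id n (T x) := by
  simp [birkhoffAverage, birkhoffSum, map_sum, ← iterate_succ_apply' T, iterate_succ_apply]

theorem tendsto_birkhoffAverage_apply_sub_birkhoffAverage (hT : ‖T‖ ≤ 1) (x : B) :
    Tendsto (fun n ↦ birkhoffAverage 𝕜 T id n (T x) - birkhoffAverage 𝕜 T id n x) atTop (𝓝 0) :=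
  _root_.tendsto_birkhoffAverage_apply_sub_birkhoffAverage 𝕜 <|
    isBounded_iff_forall_norm_le.2 ⟨‖x‖, Set.forall_mem_range.2 (T.norm_iterate_apply_le hT · x)⟩

theorem self_sub_iterate_mem_range (k : ℕ) (x : B) :
    x - T^[k] x ∈ LinearMap.range ((T : B →ₗ[𝕜] B) - 1) := by
  induction k with
  | zero => simp
  | succ k ih =>
    have hstep : T^[k] x - T (T^[k] x) ∈ LinearMap.range ((T : B →ₗ[𝕜] B) - 1) :=
      ⟨-T^[k] x, by simp [neg_add_eq_sub]⟩
    simpa [iterate_succ_apply'] using add_mem ih hstep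

theorem self_sub_birkhoffAverage_mem_range {n : ℕ} (hn : n ≠ 0) (x : B) :
    x - birkhoffAverage 𝕜 T id n x ∈ LinearMap.range ((T : B →ₗ[𝕜] B) - 1) := by
  have hx : x = (n : 𝕜)⁻¹ • ∑ _k ∈ Finset.range n, x := by
    rw [Finset.sum_const, Finset.card_range, ← Nat.cast_smul_eq_nsmul 𝕜, inv_smul_smul₀]
    exact_mod_cast hn
  rw [birkhoffAverage, birkhoffSum, hx, ← smul_sub, ← Finset.sum_sub_distrib, ← hx]
  exact Submodule.smul_mem _ _ (Submodule.sum_mem _ fun k _ ↦ T.self_sub_iterate_mem_range k x)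

theorem tendsto_birkhoffAverage_of_mem_closure_range (hT : ‖T‖ ≤ 1) {z : B}
    (hz : z ∈ closure (LinearMap.range ((T : B →ₗ[𝕜] B) - 1) : Set B)) :
    Tendsto (birkhoffAverage 𝕜 T id · z) atTop (𝓝 0) := by
  refine closure_minimal (fun z hz ↦ ?_) (isClosed_setOfPred_tendsto_birkhoffAverage 𝕜
    (T.lipschitzWith_one_of_norm_le_one hT) uniformContinuous_id continuous_const) hz
  obtain ⟨w, rfl⟩ := hz
  simpa [birkhoffAverage_apply_sub] using T.tendsto_birkhoffAverage_apply_sub_birkhoffAverage hT w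

variable {T} {x y : B}

theorem apply_eq_of_mapClusterPt_birkhoffAverage (hT : ‖T‖ ≤ 1)
    (hy : MapClusterPt (toWeakSpace 𝕜 B y) atTop (toWeakSpace 𝕜 B <| birkhoffAverage 𝕜 T id · x)) :
    T y = y := by
  have hcl := hy.continuousAt_comp (WeakSpace.map (T - 1)).continuous.continuousAt
  have hlim : Tendsto (fun n ↦ T (birkhoffAverage 𝕜 T id n x) - birkhoffAverage 𝕜 T id n x)
      atTop (𝓝 0) := by
    simpa only [apply_birkhoffAverage] using
      T.tendsto_birkhoffAverage_apply_sub_birkhoffAverage hT x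
  have hfix : WeakSpace.map (T - 1) (toWeakSpace 𝕜 B y) = 0 := eq_of_nhds_neBot <|
    ClusterPt.mono hcl (((toWeakSpaceCLM 𝕜 B).continuous.tendsto' 0 0 (map_zero _)).comp hlim)
  exact sub_eq_zero.1 hfix

theorem sub_mem_closure_range_of_mapClusterPt_birkhoffAverage
    (hy : MapClusterPt (toWeakSpace 𝕜 B y) atTop (toWeakSpace 𝕜 B <| birkhoffAverage 𝕜 T id · x)) :
    x - y ∈ closure (LinearMap.range ((T : B →ₗ[𝕜] B) - 1) : Set B) := by
  have hcl : MapClusterPt (toWeakSpace 𝕜 B (x - y)) atTop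
      (toWeakSpace 𝕜 B <| x - birkhoffAverage 𝕜 T id · x) := by
    simpa [Function.comp_def] using hy.continuousAt_comp
      (f := fun z ↦ toWeakSpace 𝕜 B x - z) (by fun_prop)
  have hmem := hcl.mem_closure_of_mem (toWeakSpace 𝕜 B '' _) <|
    (eventually_ne_atTop 0).mono fun n hn ↦
      Set.mem_image_of_mem _ (T.self_sub_birkhoffAverage_mem_range hn x)
  rwa [← Submodule.toWeakSpace_closure, (toWeakSpace 𝕜 B).injective.mem_set_image] at hmem

theorem tendsto_birkhoffAverage_of_mapClusterPt (hT : ‖T‖ ≤ 1)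
    (hy : MapClusterPt (toWeakSpace 𝕜 B y) atTop (toWeakSpace 𝕜 B <| birkhoffAverage 𝕜 T id · x)) :
    Tendsto (birkhoffAverage 𝕜 T id · x) atTop (𝓝 y) := by
  have hfix : IsFixedPt T y := apply_eq_of_mapClusterPt_birkhoffAverage hT hy
  simpa [birkhoffAverage_apply_sub] using
    (T.tendsto_birkhoffAverage_of_mem_closure_range hT
      (sub_mem_closure_range_of_mapClusterPt_birkhoffAverage hy)).add
    (hfix.tendsto_birkhoffAverage 𝕜 id)

end ContinuousLinearMap

end

theorem mean_ergodic_reflexive_general {𝕜 : Type*} [RCLike 𝕜]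
    {B : Type*} [NormedAddCommGroup B] [NormedSpace 𝕜 B]
    (hrefl : Function.Surjective (NormedSpace.inclusionInDoubleDual 𝕜 B))
    (T : B →L[𝕜] B) (hT : ‖T‖ ≤ 1) :
    ∀ x : B, ∃ y : B, T y = y ∧
      Tendsto (fun n : ℕ => (n : 𝕜)⁻¹ • ∑ k ∈ range n, (T ^ k) x)
        atTop (nhds y) := by
  intro x
  obtain ⟨y, hy⟩ := exists_mapClusterPt_toWeakSpace_of_isBounded hrefl (l := atTop)
    (u := (birkhoffAverage 𝕜 T id · x)) <| isBounded_iff_forall_norm_le.2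
      ⟨‖x‖, Set.forall_mem_range.2 (T.norm_birkhoffAverage_le hT · x)⟩
  refine ⟨y, T.apply_eq_of_mapClusterPt_birkhoffAverage hT hy, ?_⟩
  simpa [birkhoffAverage, birkhoffSum, FunLike.coe_pow_eq_iterate] using
    T.tendsto_birkhoffAverage_of_mapClusterPt hT hy

/-- Mean ergodic theorem in a reflexive Banach space: if `T` is a linear
contraction of a reflexive Banach space `B`, then for every `x` the Cesàro
averages `(1/n) ∑_{k<n} T^k x` converge in norm to a `T`-fixed point. -/
theorem mean_ergodic_reflexive {𝕜 : Type*} [RCLike 𝕜]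
    {B : Type*} [NormedAddCommGroup B] [NormedSpace 𝕜 B] [CompleteSpace B]
    (hrefl : Function.Surjective (NormedSpace.inclusionInDoubleDual 𝕜 B))
    (T : B →L[𝕜] B) (hT : ‖T‖ ≤ 1) :
    ∀ x : B, ∃ y : B, T y = y ∧
      Tendsto (fun n : ℕ => (n : 𝕜)⁻¹ • ∑ k ∈ range n, (T ^ k) x)
        atTop (nhds y) :=
  mean_ergodic_reflexive_general hrefl T hT
end

section
/- Let T₁, ..., T_d be commuting linear contractions on a Banach space B such that for each i and each x ∈ B the averages (1/n)Σ_{k=0}^{n−1} T_i^k x converge in norm (with limit denoted Φ_i(x), and each Φ_i is a contraction commuting with the T_j's). Then the multiaverages s_k(x) = (1/(k₁⋯k_d)) Σ_{i₁<k₁} ⋯ Σ_{i_d<k_d} T₁^{i₁}⋯T_d^{i_d} x converge in norm, as k → ∞ in Pringsheim's sense, to Φ₁(Φ₂(⋯Φ_d(x)⋯)). (Inductive step of Theorem 2.3 / the mean multiparameter ergodic theorem.) -/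
/-!
Expanding the product of sums, the multiaverage operator is the ordered product
`A₁ ⋯ A_d` of the one-parameter Cesàro averages `A_j = (1/k_j) Σ_{m < k_j} T_j ^ m`.
Each `A_j` is a contraction, so telescoping gives
`‖A₁ ⋯ A_d x - Φ₁ ⋯ Φ_d x‖ ≤ Σ_j ‖(A_j - Φ_j) y_j‖` with `y_j = Φ_{j+1} ⋯ Φ_d x`,
and each summand is small once `k_j` is large, by one-parameter convergence at the
single vector `y_j`.
-/

open Finset Filter

namespace List

theorem prod_ofFn_sum {R ι : Type*} [NonAssocSemiring R] {d : ℕ} (s : Fin d → Finset ι)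
    (f : Fin d → ι → R) :
    (ofFn fun j => ∑ m ∈ s j, f j m).prod =
      ∑ i ∈ Fintype.piFinset s, (ofFn fun j => f j (i j)).prod := by
  induction d with
  | zero => simp
  | succ d ih =>
    rw [ofFn_succ, prod_cons, ih, sum_mul_sum, ← sum_product']
    refine sum_equiv (Fin.consEquiv fun _ => ι) (fun p => ?_) (fun p _ => ?_)
    · simp [Fin.consEquiv, Fin.forall_fin_succ]
    · simp [ofFn_succ, Fin.consEquiv]

theorem prod_ofFn_smul {K R : Type*} [CommMonoid K] [Monoid R] [MulAction K R]
    [IsScalarTower K R R] [SMulCommClass K R R] {d : ℕ} (c : Fin d → K) (a : Fin d → R) :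
    (ofFn fun j => c j • a j).prod = (∏ j, c j) • (ofFn a).prod := by
  induction d with
  | zero => simp
  | succ d ih =>
    rw [ofFn_succ, prod_cons, ih, ofFn_succ, prod_cons, Fin.prod_univ_succ, smul_mul_smul_comm]

end List

section Cesaro

variable (𝕜 : Type*) {R : Type*}

def cesaroAverage [DivisionSemiring 𝕜] [Semiring R] [Module 𝕜 R] (a : R) (n : ℕ) : R :=
  (n : 𝕜)⁻¹ • ∑ m ∈ range n, a ^ m

theorem prod_ofFn_cesaroAverage [Semifield 𝕜] [Semiring R] [Algebra 𝕜 R] {d : ℕ}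
    (a : Fin d → R) (k : Fin d → ℕ) :
    (List.ofFn fun j => cesaroAverage 𝕜 (a j) (k j)).prod =
      (∏ j, (k j : 𝕜))⁻¹ •
        ∑ i ∈ Fintype.piFinset (fun j => range (k j)), (List.ofFn fun j => a j ^ i j).prod := by
  simp only [cesaroAverage]
  rw [List.prod_ofFn_smul, prod_inv_distrib, List.prod_ofFn_sum]

end Cesaro

section Contraction

variable {𝕜 E : Type*} [NontriviallyNormedField 𝕜] [SeminormedAddCommGroup E]
  [NormedSpace 𝕜 E]

theorem ContinuousLinearMap.norm_pow_le_one_s10 {S : E →L[𝕜] E} (hS : ‖S‖ ≤ 1) (m : ℕ) :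
    ‖S ^ m‖ ≤ 1 := by
  induction m with
  | zero => exact norm_id_le
  | succ m ih =>
    calc ‖S ^ (m + 1)‖ ≤ ‖S ^ m‖ * ‖S‖ := by rw [pow_succ]; exact norm_mul_le _ _
      _ ≤ 1 := mul_le_one₀ ih (norm_nonneg _) hS

theorem ContinuousLinearMap.norm_apply_sub_apply_le {A : E →L[𝕜] E} (hA : ‖A‖ ≤ 1)
    (C : E →L[𝕜] E) (y z : E) : ‖A y - C z‖ ≤ ‖y - z‖ + ‖(A - C) z‖ := by
  have hsplit : A y - C z = A (y - z) + (A - C) z := by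
    rw [map_sub, sub_apply]; abel
  calc ‖A y - C z‖ ≤ ‖A (y - z)‖ + ‖(A - C) z‖ := hsplit ▸ norm_add_le _ _
    _ ≤ ‖y - z‖ + ‖(A - C) z‖ := by
      gcongr
      simpa using A.le_of_opNorm_le hA (y - z)

theorem ContinuousLinearMap.norm_prod_ofFn_apply_sub_le {n : ℕ} (P Q : Fin n → E →L[𝕜] E)
    (hP : ∀ j, ‖P j‖ ≤ 1) (x : E) :
    ‖(List.ofFn P).prod x - (List.ofFn Q).prod x‖ ≤
      ∑ j, ‖(P j - Q j) (((List.ofFn Q).drop (j + 1)).prod x)‖ := by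
  induction n with
  | zero => simp
  | succ n ih =>
    rw [List.ofFn_succ (f := P), List.ofFn_succ (f := Q), Fin.sum_univ_succ]
    simp only [List.prod_cons, mul_apply_eq_comp, Fin.val_zero, zero_add,
      Fin.val_succ, List.drop_succ_cons, List.drop_zero]
    calc _ ≤ _ := (P 0).norm_apply_sub_apply_le (hP 0) (Q 0) _ _
      _ ≤ _ := add_le_add_left (ih _ _ fun j => hP j.succ) _
      _ = _ := add_comm _ _

theorem cesaroAverage_apply (S : E →L[𝕜] E) (n : ℕ) (x : E) :
    cesaroAverage 𝕜 S n x = (n : 𝕜)⁻¹ • ∑ m ∈ range n, (S ^ m) x := by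
  rw [cesaroAverage, smul_apply, _root_.sum_apply]

end Contraction

theorem norm_cesaroAverage_le_one {𝕜 E : Type*} [RCLike 𝕜] [SeminormedAddCommGroup E]
    [NormedSpace 𝕜 E] {S : E →L[𝕜] E} (hS : ‖S‖ ≤ 1) (n : ℕ) :
    ‖cesaroAverage 𝕜 S n‖ ≤ 1 := by
  have hsum : ‖∑ m ∈ range n, S ^ m‖ ≤ n := by
    simpa using norm_sum_le_of_le (range n) fun m _ => S.norm_pow_le_one_s10 hS m
  calc ‖cesaroAverage 𝕜 S n‖ ≤ (n : ℝ)⁻¹ * n := by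
        rw [cesaroAverage, norm_smul, norm_inv, RCLike.norm_natCast]
        gcongr
    _ ≤ 1 := inv_mul_le_one_of_le₀ le_rfl (Nat.cast_nonneg n)

theorem multiparameter_mean_ergodic_general {B : Type*} [NormedAddCommGroup B]
    [NormedSpace ℝ B] (d : ℕ)
    (T : Fin d → (B →L[ℝ] B)) (hT : ∀ i, ‖T i‖ ≤ 1)
    (Φ : Fin d → (B →L[ℝ] B))
    (hlim : ∀ (i : Fin d) (x : B),
      Tendsto (fun n : ℕ => (n : ℝ)⁻¹ • ∑ k ∈ range n, (T i ^ k) x)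
        atTop (nhds (Φ i x))) :
    ∀ x : B, ∀ ε > (0 : ℝ), ∃ N : ℕ, ∀ k : Fin d → ℕ, (∀ j, N ≤ k j) →
      ‖(∏ j, (k j : ℝ))⁻¹ •
          (∑ i ∈ Fintype.piFinset (fun j => range (k j)),
            (List.ofFn (fun j => T j ^ i j)).prod x) -
        (List.ofFn Φ).prod x‖ < ε := by
  intro x ε hε
  set y : Fin d → B := fun j => ((List.ofFn Φ).drop (j + 1)).prod x
  have hδ : 0 < ε / (d + 1) := by positivity
  choose N hN using fun j => Metric.tendsto_atTop.mp (hlim j (y j)) _ hδ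
  refine ⟨univ.sup N, fun k hk => ?_⟩
  have hclose (j : Fin d) : ‖(cesaroAverage ℝ (T j) (k j) - Φ j) (y j)‖ ≤ ε / (d + 1) := by
    have h := hN j (k j) ((le_sup (mem_univ j)).trans (hk j))
    rw [dist_eq_norm, ← cesaroAverage_apply] at h
    exact h.le
  rw [← _root_.sum_apply, ← smul_apply, ← prod_ofFn_cesaroAverage]
  calc _ ≤ ∑ j, ‖(cesaroAverage ℝ (T j) (k j) - Φ j) (y j)‖ :=
        ContinuousLinearMap.norm_prod_ofFn_apply_sub_le _ _
          (fun j => norm_cesaroAverage_le_one (hT j) _) x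
    _ ≤ ∑ _j : Fin d, ε / (d + 1) := sum_le_sum fun j _ => hclose j
    _ < ε := by
      rw [sum_const, card_univ, Fintype.card_fin, nsmul_eq_mul, ← mul_div_assoc,
        div_lt_iff₀ (by positivity)]
      linarith

/-- Multiparameter mean ergodic theorem: if `T 1, ..., T d` are commuting
contractions of a Banach space whose one-parameter Cesàro averages converge in
norm to contractions `Φ i` (with `T i ∘ Φ i = Φ i` and `Φ i` commuting with every
`T j`), then the multiaverages converge in norm, in Pringsheim's sense, to the
composition `Φ 1 ∘ ⋯ ∘ Φ d`. -/
theorem multiparameter_mean_ergodic {B : Type*} [NormedAddCommGroup B]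
    [NormedSpace ℝ B] [CompleteSpace B] (d : ℕ) (hd : 0 < d)
    (T : Fin d → (B →L[ℝ] B)) (hT : ∀ i, ‖T i‖ ≤ 1)
    (hcomm : ∀ i j, T i * T j = T j * T i)
    (Φ : Fin d → (B →L[ℝ] B)) (hΦ : ∀ i, ‖Φ i‖ ≤ 1)
    (hfix : ∀ i, T i * Φ i = Φ i)
    (hΦcomm : ∀ i j, Φ i * T j = T j * Φ i)
    (hlim : ∀ (i : Fin d) (x : B),
      Tendsto (fun n : ℕ => (n : ℝ)⁻¹ • ∑ k ∈ range n, (T i ^ k) x)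
        atTop (nhds (Φ i x))) :
    ∀ x : B, ∀ ε > (0 : ℝ), ∃ N : ℕ, ∀ k : Fin d → ℕ, (∀ j, N ≤ k j) →
      ‖(∏ j, (k j : ℝ))⁻¹ •
          (∑ i ∈ Fintype.piFinset (fun j => range (k j)),
            (List.ofFn (fun j => T j ^ i j)).prod x) -
        (List.ofFn Φ).prod x‖ < ε :=
  multiparameter_mean_ergodic_general d T hT Φ hlim
end

section
/- Classical Banach principle for double sequences (commutative version of Theorem 1.4, due to Móricz): Let (X,μ) be a probability space and for each (k₁,k₂) ∈ ℕ² let a_{k₁,k₂} : L¹(X,μ) → L⁰(X,μ) be a continuous positive linear map. Suppose (i) for every f ∈ L¹, sup over all (k₁,k₂) with min ≥ some K of |a_{k₁,k₂}(f)| is finite almost everywhere on a set of measure ≥ 1 − δ for every δ > 0, in a suitable uniform sense; and (ii) there is a minorantly dense subset B₀ of the positive cone of L¹ such that a_{k₁,k₂}(f) − a_{m₁,m₂}(f) → 0 almost uniformly (in Egorov's sense) in Pringsheim's sense for f ∈ B₀. Then for every f ∈ L¹, a_{k₁,k₂}(f) converges almost uniformly in Pringsheim's sense. -/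
/-!
Write `f = f⁺ - f⁻`, so it suffices to treat `f ≥ 0`. Choose `gₙ ∈ B₀` below `f` with
`‖f - gₙ‖ ≤ 4⁻ⁿ`; then `h = ∑ 2ⁿ (f - gₙ)` converges in the ordered Banach space and dominates
every `2ⁿ (f - gₙ)`. By positivity `0 ≤ aₖ f - aₖ gₙ ≤ 2⁻ⁿ aₖ h`, and by (i) `aₖ h` is bounded
for large `k` off a small set. Hence, off a small set, `aₖ f` is uniformly approximated by the
almost uniformly Cauchy double sequences `aₖ gₙ`, so it is almost uniformly Cauchy itself. The
limit is then read off the diagonal `a₍ₙ,ₙ₎ f`.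
-/

open MeasureTheory Filter

section

variable {X : Type*} [MeasurableSpace X] {μ : Measure X}

/-- `OnLargeSets μ (PringsheimTendstoOn μ u g)` is almost uniform convergence (in Egorov's sense)
of `u` to `g` in Pringsheim's sense. -/
def OnLargeSets (μ : Measure X) (P : Set X → Prop) : Prop :=
  ∀ ε > (0 : ℝ), ∃ E : Set X, MeasurableSet E ∧ μ Eᶜ ≤ ENNReal.ofReal ε ∧ P E

namespace OnLargeSets

variable {P Q : Set X → Prop}

theorem mono (h : OnLargeSets μ P) (hPQ : ∀ E, P E → Q E) : OnLargeSets μ Q := fun ε hε =>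
  let ⟨E, hEm, hEc, hE⟩ := h ε hε
  ⟨E, hEm, hEc, hPQ E hE⟩

theorem and (h₁ : OnLargeSets μ P) (h₂ : OnLargeSets μ Q) (hP : Antitone P)
    (hQ : Antitone Q) : OnLargeSets μ fun E => P E ∧ Q E := by
  intro ε hε
  obtain ⟨E, hEm, hEc, hE⟩ := h₁ (ε / 2) (by positivity)
  obtain ⟨F, hFm, hFc, hF⟩ := h₂ (ε / 2) (by positivity)
  refine ⟨E ∩ F, hEm.inter hFm, ?_, hP Set.inter_subset_left hE, hQ Set.inter_subset_right hF⟩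
  calc μ (E ∩ F)ᶜ ≤ μ Eᶜ + μ Fᶜ := by rw [Set.compl_inter]; exact measure_union_le _ _
    _ ≤ ENNReal.ofReal (ε / 2) + ENNReal.ofReal (ε / 2) := add_le_add hEc hFc
    _ = ENNReal.ofReal ε := by
      rw [← ENNReal.ofReal_add (by positivity) (by positivity), add_halves]

theorem forall_nat {P : ℕ → Set X → Prop} (hP : ∀ n, Antitone (P n))
    (h : ∀ n, OnLargeSets μ (P n)) : OnLargeSets μ fun E => ∀ n, P n E := by
  intro ε hε
  obtain ⟨η, hη, hηε⟩ := ENNReal.exists_pos_sum_of_countable (ENNReal.ofReal_pos.2 hε).ne' ℕ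
  choose E hEm hEc hE using fun n => h n (η n) (hη n)
  refine ⟨⋂ n, E n, .iInter hEm, ?_, fun n => hP n (Set.iInter_subset _ n) (hE n)⟩
  calc μ (⋂ n, E n)ᶜ ≤ ∑' n, μ (E n)ᶜ := by rw [Set.compl_iInter]; exact measure_iUnion_le _
    _ ≤ ∑' n, (η n : ENNReal) := ENNReal.tsum_le_tsum fun n => by simpa using hEc n
    _ ≤ ENNReal.ofReal ε := hηε.le

end OnLargeSets

def PringsheimCauchyOn (μ : Measure X) (u : ℕ × ℕ → X → ℝ) (E : Set X) : Prop :=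
  ∀ δ > (0 : ℝ), ∃ N : ℕ, ∀ k m : ℕ × ℕ, N ≤ min k.1 k.2 → N ≤ min m.1 m.2 →
    ∀ᵐ x ∂μ, x ∈ E → |u k x - u m x| ≤ δ

def PringsheimBoundedOn (μ : Measure X) (u : ℕ × ℕ → X → ℝ) (E : Set X) : Prop :=
  ∃ (K : ℕ) (M : ℝ), ∀ k : ℕ × ℕ, K ≤ min k.1 k.2 → ∀ᵐ x ∂μ, x ∈ E → |u k x| ≤ M

def PringsheimTendstoOn (μ : Measure X) (u : ℕ × ℕ → X → ℝ) (g : X → ℝ) (E : Set X) : Prop :=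
  ∀ δ > (0 : ℝ), ∃ N : ℕ, ∀ k : ℕ × ℕ, N ≤ min k.1 k.2 → ∀ᵐ x ∂μ, x ∈ E → |u k x - g x| ≤ δ

variable {u : ℕ × ℕ → X → ℝ} {E : Set X}

theorem antitone_pringsheimCauchyOn : Antitone (PringsheimCauchyOn μ u) :=
  fun _ _ hEF h δ hδ => (h δ hδ).imp fun _ hN k m hk hm =>
    (hN k m hk hm).mono fun _ hx hxE => hx (hEF hxE)

theorem antitone_pringsheimBoundedOn : Antitone (PringsheimBoundedOn μ u) :=
  fun _ _ hEF ⟨K, M, hM⟩ => ⟨K, M, fun k hk => (hM k hk).mono fun _ hx hxE => hx (hEF hxE)⟩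

namespace PringsheimCauchyOn

theorem of_ae_eq_sub {v w : ℕ × ℕ → X → ℝ} (hv : PringsheimCauchyOn μ v E)
    (hw : PringsheimCauchyOn μ w E) (huvw : ∀ k, u k =ᵐ[μ] v k - w k) :
    PringsheimCauchyOn μ u E := by
  intro δ hδ
  obtain ⟨N₁, hN₁⟩ := hv (δ / 2) (by positivity)
  obtain ⟨N₂, hN₂⟩ := hw (δ / 2) (by positivity)
  refine ⟨max N₁ N₂, fun k m hk hm => ?_⟩
  rw [max_le_iff] at hk hm
  filter_upwards [huvw k, huvw m, hN₁ k m hk.1 hm.1, hN₂ k m hk.2 hm.2]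
    with x hk hm hvx hwx hxE
  rw [hk, hm, Pi.sub_apply, Pi.sub_apply]
  calc |v k x - w k x - (v m x - w m x)| = |(v k x - v m x) - (w k x - w m x)| := by ring_nf
    _ ≤ |v k x - v m x| + |w k x - w m x| := abs_sub _ _
    _ ≤ δ := by linarith [hvx hxE, hwx hxE]

theorem of_approx {v : ℕ → ℕ × ℕ → X → ℝ} (hv : ∀ n, PringsheimCauchyOn μ (v n) E)
    (happrox : ∀ δ > (0 : ℝ), ∃ (n K : ℕ), ∀ k : ℕ × ℕ, K ≤ min k.1 k.2 →
      ∀ᵐ x ∂μ, x ∈ E → |u k x - v n k x| ≤ δ) :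
    PringsheimCauchyOn μ u E := by
  intro δ hδ
  obtain ⟨n, K, hK⟩ := happrox (δ / 3) (by positivity)
  obtain ⟨N, hN⟩ := hv n (δ / 3) (by positivity)
  refine ⟨max K N, fun k m hk hm => ?_⟩
  rw [max_le_iff] at hk hm
  filter_upwards [hK k hk.1, hK m hm.1, hN k m hk.2 hm.2] with x hkx hmx hvx hxE
  have h₁ := abs_sub_le (u k x) (v n k x) (u m x)
  have h₂ := abs_sub_le (v n k x) (v n m x) (u m x)
  rw [abs_sub_comm (v n m x)] at h₂
  linarith [hkx hxE, hmx hxE, hvx hxE]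

theorem tendstoOn_limUnder (h : PringsheimCauchyOn μ u E) :
    PringsheimTendstoOn μ u (fun x => limUnder atTop fun n => u (n, n) x) E := by
  choose N hN using fun j : ℕ => h (1 / (j + 1)) Nat.one_div_pos_of_nat
  have hae : ∀ᵐ x ∂μ, ∀ (j : ℕ) (k m : ℕ × ℕ), N j ≤ min k.1 k.2 → N j ≤ min m.1 m.2 →
      x ∈ E → |u k x - u m x| ≤ 1 / (j + 1) := by
    simp only [ae_all_iff, eventually_imp_distrib_left]
    exact hN
  intro δ hδ
  obtain ⟨j, hj⟩ := exists_nat_one_div_lt hδ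
  refine ⟨N j, fun k hk => ?_⟩
  filter_upwards [hae] with x hx hxE
  have hdiag : CauchySeq fun n => u (n, n) x := Metric.cauchySeq_iff'.2 fun ε hε => by
    obtain ⟨i, hi⟩ := exists_nat_one_div_lt hε
    exact ⟨N i, fun n hn => (hx i (n, n) (N i, N i) (by simpa using hn) (by simp) hxE).trans_lt hi⟩
  have hlim := (tendsto_const_nhds (x := u k x)).sub hdiag.tendsto_limUnder |>.abs
  refine le_of_tendsto hlim (eventually_atTop.2 ⟨N j, fun n hn => ?_⟩) |>.trans hj.le
  exact hx j k (n, n) hk (by simpa using hn) hxE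

end PringsheimCauchyOn

theorem ae_eq_sub_of_ae_eq_add {V : Type*} [AddGroup V] {T : V → X → ℝ}
    (hadd : ∀ f g, T (f + g) =ᵐ[μ] T f + T g) (f g : V) : T (f - g) =ᵐ[μ] T f - T g := by
  filter_upwards [hadd (f - g) g] with x hx
  rw [sub_add_cancel] at hx
  rw [Pi.sub_apply, hx, Pi.add_apply, add_sub_cancel_right]

theorem ae_le_of_le_of_pos {V : Type*} [AddGroup V] [LE V] [AddRightMono V] {T : V → X → ℝ}
    (hadd : ∀ f g, T (f + g) =ᵐ[μ] T f + T g) (hpos : ∀ f, 0 ≤ f → 0 ≤ᵐ[μ] T f) {f g : V}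
    (hfg : f ≤ g) : T f ≤ᵐ[μ] T g := by
  filter_upwards [ae_eq_sub_of_ae_eq_add hadd g f, hpos _ (sub_nonneg.2 hfg)] with x hx hx0
  rw [hx] at hx0
  exact sub_nonneg.1 hx0

theorem exists_two_pow_smul_le_of_norm_le {V : Type*} [NormedAddCommGroup V] [NormedSpace ℝ V]
    [CompleteSpace V] [PartialOrder V] [IsOrderedAddMonoid V] [OrderClosedTopology V]
    [PosSMulMono ℝ V] {ψ : ℕ → V} (hψ₀ : ∀ n, 0 ≤ ψ n) (hψ : ∀ n, ‖ψ n‖ ≤ (1 / 4 : ℝ) ^ n) :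
    ∃ h : V, ∀ n, (2 : ℝ) ^ n • ψ n ≤ h := by
  have hnorm (n : ℕ) : ‖(2 : ℝ) ^ n • ψ n‖ ≤ (1 / 2 : ℝ) ^ n :=
    calc ‖(2 : ℝ) ^ n • ψ n‖ = 2 ^ n * ‖ψ n‖ := by rw [norm_smul, norm_pow, Real.norm_two]
      _ ≤ 2 ^ n * (1 / 4) ^ n := by gcongr; exact hψ n
      _ = (1 / 2) ^ n := by rw [← mul_pow]; norm_num
  exact ⟨_, fun n => (summable_geometric_two.of_norm_bounded hnorm).le_tsum n
    fun j _ => smul_nonneg (by positivity) (hψ₀ j)⟩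

section PositiveMaps

variable {V : Type*} [NormedAddCommGroup V] [NormedSpace ℝ V] [CompleteSpace V]
  {a : ℕ × ℕ → V → X → ℝ} {B₀ : Set V}

theorem pringsheimAUCauchy_of_nonneg [PartialOrder V] [IsOrderedAddMonoid V]
    [OrderClosedTopology V] [PosSMulMono ℝ V]
    (hadd : ∀ k f g, a k (f + g) =ᵐ[μ] a k f + a k g)
    (hsmul : ∀ (k) (c : ℝ) (f), a k (c • f) =ᵐ[μ] c • a k f)
    (hpos : ∀ k f, 0 ≤ f → 0 ≤ᵐ[μ] a k f)
    (hbdd : ∀ f, OnLargeSets μ (PringsheimBoundedOn μ fun k => a k f))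
    (hdense : ∀ f : V, 0 ≤ f → ∀ ε > (0 : ℝ), ∃ g ∈ B₀, g ≤ f ∧ ‖f - g‖ ≤ ε)
    (hcauchy : ∀ f ∈ B₀, OnLargeSets μ (PringsheimCauchyOn μ fun k => a k f))
    {f : V} (hf : 0 ≤ f) : OnLargeSets μ (PringsheimCauchyOn μ fun k => a k f) := by
  choose g hgB hgf hfg using fun n : ℕ => hdense f hf ((1 / 4 : ℝ) ^ n) (by positivity)
  obtain ⟨h, hh⟩ := exists_two_pow_smul_le_of_norm_le (fun n => sub_nonneg.2 (hgf n)) hfg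
  have hdom (n : ℕ) (k : ℕ × ℕ) :
      ∀ᵐ x ∂μ, |a k f x - a k (g n) x| ≤ (1 / 2 : ℝ) ^ n * a k h x := by
    filter_upwards [ae_eq_sub_of_ae_eq_add (hadd k) f (g n), hpos k _ (sub_nonneg.2 (hgf n)),
      hsmul k ((2 : ℝ) ^ n) (f - g n), ae_le_of_le_of_pos (hadd k) (hpos k) (hh n)]
      with x hsub hnonneg hsmulx hle
    simp only [Pi.sub_apply, Pi.smul_apply, smul_eq_mul, Pi.zero_apply] at hsub hnonneg hsmulx
    rw [hsmulx] at hle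
    rw [← hsub, abs_of_nonneg hnonneg]
    calc a k (f - g n) x = (1 / 2 : ℝ) ^ n * (2 ^ n * a k (f - g n) x) := by
          rw [← mul_assoc, ← mul_pow]; norm_num
      _ ≤ (1 / 2 : ℝ) ^ n * a k h x := by gcongr
  have happrox (E : Set X) (hE : PringsheimBoundedOn μ (fun k => a k h) E) (δ : ℝ) (hδ : 0 < δ) :
      ∃ (n K : ℕ), ∀ k : ℕ × ℕ, K ≤ min k.1 k.2 →
        ∀ᵐ x ∂μ, x ∈ E → |a k f x - a k (g n) x| ≤ δ := by
    obtain ⟨K, M, hM⟩ := hE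
    have hsmall : Tendsto (fun n : ℕ => (1 / 2 : ℝ) ^ n * M) atTop (nhds 0) := by
      simpa using (tendsto_pow_atTop_nhds_zero_of_lt_one (r := (1 / 2 : ℝ)) (by norm_num)
        (by norm_num)).mul_const M
    obtain ⟨n, hn⟩ := (hsmall.eventually (ge_mem_nhds hδ)).exists
    refine ⟨n, K, fun k hk => ?_⟩
    filter_upwards [hdom n k, hM k hk] with x hx hxM hxE
    calc |a k f x - a k (g n) x| ≤ (1 / 2 : ℝ) ^ n * a k h x := hx
      _ ≤ (1 / 2 : ℝ) ^ n * M := by gcongr; exact (le_abs_self _).trans (hxM hxE)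
      _ ≤ δ := hn
  have hgAU :=
    OnLargeSets.forall_nat (fun _ => antitone_pringsheimCauchyOn) fun n => hcauchy _ (hgB n)
  refine ((hbdd h).and hgAU antitone_pringsheimBoundedOn
    fun _ _ hEF hF n => antitone_pringsheimCauchyOn hEF (hF n)).mono
    fun E ⟨hE, hgE⟩ => PringsheimCauchyOn.of_approx hgE (happrox E hE)

theorem pringsheimAUCauchy_of_minorantlyDense [Lattice V] [IsOrderedAddMonoid V]
    [OrderClosedTopology V] [PosSMulMono ℝ V]
    (hadd : ∀ k f g, a k (f + g) =ᵐ[μ] a k f + a k g)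
    (hsmul : ∀ (k) (c : ℝ) (f), a k (c • f) =ᵐ[μ] c • a k f)
    (hpos : ∀ k f, 0 ≤ f → 0 ≤ᵐ[μ] a k f)
    (hbdd : ∀ f, OnLargeSets μ (PringsheimBoundedOn μ fun k => a k f))
    (hdense : ∀ f : V, 0 ≤ f → ∀ ε > (0 : ℝ), ∃ g ∈ B₀, g ≤ f ∧ ‖f - g‖ ≤ ε)
    (hcauchy : ∀ f ∈ B₀, OnLargeSets μ (PringsheimCauchyOn μ fun k => a k f)) (f : V) :
    OnLargeSets μ (PringsheimCauchyOn μ fun k => a k f) := by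
  have hcone {f : V} (hf : 0 ≤ f) : OnLargeSets μ (PringsheimCauchyOn μ fun k => a k f) :=
    pringsheimAUCauchy_of_nonneg hadd hsmul hpos hbdd hdense hcauchy hf
  refine ((hcone (posPart_nonneg f)).and (hcone (negPart_nonneg f)) antitone_pringsheimCauchyOn
    antitone_pringsheimCauchyOn).mono fun E ⟨hplus, hminus⟩ => hplus.of_ae_eq_sub hminus fun k => ?_
  conv_lhs => rw [← posPart_sub_negPart f]
  exact ae_eq_sub_of_ae_eq_add (hadd k) _ _

end PositiveMaps

instance MeasureTheory.Lp.instPosSMulMono {p : ENNReal} : PosSMulMono ℝ (Lp ℝ p μ) where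
  smul_le_smul_of_nonneg_left c hc f g hfg := by
    rw [← Lp.coeFn_le] at hfg ⊢
    filter_upwards [Lp.coeFn_smul c f, Lp.coeFn_smul c g, hfg] with x hf hg hx
    rw [hf, hg]
    exact mul_le_mul_of_nonneg_left hx hc

end

theorem banach_principle_double_sequences_general {X : Type*} [MeasurableSpace X]
    (μ : Measure X)
    (a : ℕ × ℕ → Lp ℝ 1 μ → X → ℝ)
    -- each `a k` is linear, positive and continuous in measure:
    (hadd : ∀ k f g, a k (f + g) =ᵐ[μ] a k f + a k g)
    (hsmul : ∀ (k) (c : ℝ) (f), a k (c • f) =ᵐ[μ] c • a k f)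
    (hpos : ∀ k f, 0 ≤ f → 0 ≤ᵐ[μ] a k f)
    -- (i) almost uniform boundedness:
    (hbdd : ∀ f : Lp ℝ 1 μ, ∀ δ > (0 : ℝ), ∃ E : Set X, MeasurableSet E ∧
      μ Eᶜ ≤ ENNReal.ofReal δ ∧ ∃ (K : ℕ) (M : ℝ), ∀ k : ℕ × ℕ,
        K ≤ min k.1 k.2 → ∀ᵐ x ∂μ, x ∈ E → |a k f x| ≤ M)
    -- (ii) a.u. Pringsheim-Cauchy on a minorantly dense subset of the cone:
    (B₀ : Set (Lp ℝ 1 μ))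
    (hdense : ∀ f : Lp ℝ 1 μ, 0 ≤ f → ∀ ε > (0 : ℝ), ∃ g ∈ B₀,
      g ≤ f ∧ ‖f - g‖ ≤ ε)
    (hcauchy : ∀ f ∈ B₀, ∀ ε > (0 : ℝ), ∃ E : Set X, MeasurableSet E ∧
      μ Eᶜ ≤ ENNReal.ofReal ε ∧ ∀ δ > (0 : ℝ), ∃ N : ℕ, ∀ k m : ℕ × ℕ,
        N ≤ min k.1 k.2 → N ≤ min m.1 m.2 →
        ∀ᵐ x ∂μ, x ∈ E → |a k f x - a m f x| ≤ δ) :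
    ∀ f : Lp ℝ 1 μ, ∃ g : X → ℝ, ∀ ε > (0 : ℝ), ∃ E : Set X, MeasurableSet E ∧
      μ Eᶜ ≤ ENNReal.ofReal ε ∧ ∀ δ > (0 : ℝ), ∃ N : ℕ, ∀ k : ℕ × ℕ,
        N ≤ min k.1 k.2 → ∀ᵐ x ∂μ, x ∈ E → |a k f x - g x| ≤ δ := fun f =>
  ⟨fun x => limUnder atTop fun n => a (n, n) f x,
    (pringsheimAUCauchy_of_minorantlyDense hadd hsmul hpos hbdd hdense hcauchy f).mono
    fun _ hE => hE.tendstoOn_limUnder⟩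

/-- Classical Banach principle for double sequences (Móricz): on a probability
space, if the continuous positive linear maps `a k : L¹ → L⁰` are (i) almost
uniformly bounded at each `f ∈ L¹` and (ii) almost uniformly Cauchy in
Pringsheim's sense on a minorantly dense subset `B₀` of the positive cone of
`L¹`, then for every `f ∈ L¹` the double sequence `a k f` converges almost
uniformly in Pringsheim's sense. -/
theorem banach_principle_double_sequences {X : Type*} [MeasurableSpace X]
    (μ : Measure X) [IsProbabilityMeasure μ]
    (a : ℕ × ℕ → Lp ℝ 1 μ → X → ℝ)
    -- each `a k` is linear, positive and continuous in measure:
    (hadd : ∀ k f g, a k (f + g) =ᵐ[μ] a k f + a k g)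
    (hsmul : ∀ (k) (c : ℝ) (f), a k (c • f) =ᵐ[μ] c • a k f)
    (hpos : ∀ k f, 0 ≤ f → 0 ≤ᵐ[μ] a k f)
    (hcont : ∀ (k) (f : ℕ → Lp ℝ 1 μ) (g : Lp ℝ 1 μ),
      Tendsto f atTop (nhds g) →
      TendstoInMeasure μ (fun n => a k (f n)) atTop (a k g))
    -- (i) almost uniform boundedness:
    (hbdd : ∀ f : Lp ℝ 1 μ, ∀ δ > (0 : ℝ), ∃ E : Set X, MeasurableSet E ∧
      μ Eᶜ ≤ ENNReal.ofReal δ ∧ ∃ (K : ℕ) (M : ℝ), ∀ k : ℕ × ℕ,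
        K ≤ min k.1 k.2 → ∀ᵐ x ∂μ, x ∈ E → |a k f x| ≤ M)
    -- (ii) a.u. Pringsheim-Cauchy on a minorantly dense subset of the cone:
    (B₀ : Set (Lp ℝ 1 μ)) (hB₀pos : ∀ f ∈ B₀, 0 ≤ f)
    (hdense : ∀ f : Lp ℝ 1 μ, 0 ≤ f → ∀ ε > (0 : ℝ), ∃ g ∈ B₀,
      g ≤ f ∧ ‖f - g‖ ≤ ε)
    (hcauchy : ∀ f ∈ B₀, ∀ ε > (0 : ℝ), ∃ E : Set X, MeasurableSet E ∧
      μ Eᶜ ≤ ENNReal.ofReal ε ∧ ∀ δ > (0 : ℝ), ∃ N : ℕ, ∀ k m : ℕ × ℕ,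
        N ≤ min k.1 k.2 → N ≤ min m.1 m.2 →
        ∀ᵐ x ∂μ, x ∈ E → |a k f x - a m f x| ≤ δ) :
    ∀ f : Lp ℝ 1 μ, ∃ g : X → ℝ, ∀ ε > (0 : ℝ), ∃ E : Set X, MeasurableSet E ∧
      μ Eᶜ ≤ ENNReal.ofReal ε ∧ ∀ δ > (0 : ℝ), ∃ N : ℕ, ∀ k : ℕ × ℕ,
        N ≤ min k.1 k.2 → ∀ᵐ x ∂μ, x ∈ E → |a k f x - g x| ≤ δ :=
  banach_principle_double_sequences_general μ a hadd hsmul hpos hbdd B₀ hdense hcauchy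
end
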